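/- Let λ ∈ ℂ \ ℤ, μ ∈ ℂ \ ℤ. Define on V = ⊕_{m,n∈ℤ} ℂv_{m,n} the action L_{r,s}·v_{m,n} = ((μ+n)/(μ+n+s+1))(λ+m)v_{m+r,n+s+1} + ((λ+m)/(λ+m+r))(μ+n)v_{m+r,n+s}. Then this defines a representation of the centerless non-graded Virasoro-like algebra. -/
import Mathlib


/-- The action L_{r,s}·v_{m,n} = ((μ+n)/(μ+n+s+1))(λ+m)v_{m+r,n+s+1}
+ ((λ+m)/(λ+m+r))(μ+n)v_{m+r,n+s}, as a linear endomorphism. -/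
noncomputable def actA0 (lam mu : ℂ) (r s : ℤ) :
    Module.End ℂ ((ℤ × ℤ) →₀ ℂ) :=
  Finsupp.lsum ℂ fun p : ℤ × ℤ =>
    ((mu + (p.2 : ℂ)) / (mu + (p.2 : ℂ) + (s : ℂ) + 1) * (lam + (p.1 : ℂ)))
        • Finsupp.lsingle (p.1 + r, p.2 + s + 1)
      + ((lam + (p.1 : ℂ)) / (lam + (p.1 : ℂ) + (r : ℂ)) * (mu + (p.2 : ℂ)))
        • Finsupp.lsingle (p.1 + r, p.2 + s)

lemma keyK1 (Y X c R H A B D : ℂ) (hA : A ≠ 0) (hB : B ≠ 0) (hD : D ≠ 0) :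
    Y / A * X * c * (A / D * (X + R)) - Y / B * X * c * (B / D * (X + H))
      = (R - H) * (Y / D * X * c) := by
  have t1 : Y / A * X * c * (A / D * (X + R)) = Y * X * c * (X + R) / D := by
    field_simp
  have t2 : Y / B * X * c * (B / D * (X + H)) = Y * X * c * (X + H) / D := by
    field_simp
  rw [t1, t2]
  field_simp
  ring

lemma keyK2 (X Y c R H S K A B : ℂ) (hA : A ≠ 0) (hB : B ≠ 0)
    (hXR : X + R ≠ 0) (hXH : X + H ≠ 0) (hD : X + R + H ≠ 0) (hE : Y + S + K + 1 ≠ 0) :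
    Y / A * X * c * ((X + R) / (X + R + H) * A)
        + X / (X + R) * Y * c * ((Y + S) / (Y + S + K + 1) * (X + R))
      - (Y / B * X * c * ((X + H) / (X + R + H) * B)
        + X / (X + H) * Y * c * ((Y + K) / (Y + S + K + 1) * (X + H)))
      = (R - H) * (X / (X + R + H) * Y * c) + (S - K) * (Y / (Y + S + K + 1) * X * c) := by
  have t1 : Y / A * X * c * ((X + R) / (X + R + H) * A) = Y * X * c * (X + R) / (X + R + H) := by
    field_simp
  have t2 : X / (X + R) * Y * c * ((Y + S) / (Y + S + K + 1) * (X + R))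
      = X * Y * c * (Y + S) / (Y + S + K + 1) := by
    field_simp
  have t3 : Y / B * X * c * ((X + H) / (X + R + H) * B) = Y * X * c * (X + H) / (X + R + H) := by
    field_simp
  have t4 : X / (X + H) * Y * c * ((Y + K) / (Y + S + K + 1) * (X + H))
      = X * Y * c * (Y + K) / (Y + S + K + 1) := by
    field_simp
  rw [t1, t2, t3, t4]
  field_simp
  ring

lemma actA0_single (lam mu : ℂ) (r s m n : ℤ) (c : ℂ) :
    actA0 lam mu r s (Finsupp.single (m, n) c) =
      ((mu + (n:ℂ)) / (mu + (n:ℂ) + (s:ℂ) + 1) * (lam + (m:ℂ)) * c)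
          • Finsupp.single (m + r, n + s + 1) (1:ℂ)
        + ((lam + (m:ℂ)) / (lam + (m:ℂ) + (r:ℂ)) * (mu + (n:ℂ)) * c)
          • Finsupp.single (m + r, n + s) (1:ℂ) := by
  simp [actA0, Finsupp.smul_single, mul_comm]

set_option maxHeartbeats 2000000 in
/-- The module A_{0,λ,μ} (λ, μ ∉ ℤ): the formulas define a representation
of the centerless non-graded Virasoro-like algebra. -/
theorem stmt_14 (lam mu : ℂ)
    (hlam : lam ∉ Set.range ((↑·) : ℤ → ℂ))
    (hmu : mu ∉ Set.range ((↑·) : ℤ → ℂ)) :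
    ∀ h k r s : ℤ,
      ⁅actA0 lam mu h k, actA0 lam mu r s⁆
        = ((r - h : ℤ) : ℂ) • actA0 lam mu (h + r) (k + s + 1)
          + ((s - k : ℤ) : ℂ) • actA0 lam mu (h + r) (k + s) := by
  have hL : ∀ t : ℤ, lam + (t : ℂ) ≠ 0 := fun t h0 =>
    hlam ⟨-t, by push_cast; linear_combination -h0⟩
  have hM : ∀ t : ℤ, mu + (t : ℂ) ≠ 0 := fun t h0 =>
    hmu ⟨-t, by push_cast; linear_combination -h0⟩
  intro h k r s
  refine Finsupp.lhom_ext fun p c => ?_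
  obtain ⟨m, n⟩ := p
  have e1 : ((m + r + h : ℤ), (n + s + 1 + k + 1 : ℤ)) = ((m + h + r : ℤ), (n + k + s + 2 : ℤ)) := by
    rw [Prod.mk.injEq]; exact ⟨by ring, by ring⟩
  have e2 : ((m + r + h : ℤ), (n + s + 1 + k : ℤ)) = ((m + h + r : ℤ), (n + k + s + 1 : ℤ)) := by
    rw [Prod.mk.injEq]; exact ⟨by ring, by ring⟩
  have e3 : ((m + r + h : ℤ), (n + s + k + 1 : ℤ)) = ((m + h + r : ℤ), (n + k + s + 1 : ℤ)) := by
    rw [Prod.mk.injEq]; exact ⟨by ring, by ring⟩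
  have e4 : ((m + r + h : ℤ), (n + s + k : ℤ)) = ((m + h + r : ℤ), (n + k + s : ℤ)) := by
    rw [Prod.mk.injEq]; exact ⟨by ring, by ring⟩
  have e5 : ((m + h + r : ℤ), (n + k + 1 + s + 1 : ℤ)) = ((m + h + r : ℤ), (n + k + s + 2 : ℤ)) := by
    rw [Prod.mk.injEq]; exact ⟨by ring, by ring⟩
  have e6 : ((m + h + r : ℤ), (n + k + 1 + s : ℤ)) = ((m + h + r : ℤ), (n + k + s + 1 : ℤ)) := by
    rw [Prod.mk.injEq]; exact ⟨by ring, by ring⟩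
  have e7 : ((m + (h + r) : ℤ), (n + (k + s + 1) + 1 : ℤ)) = ((m + h + r : ℤ), (n + k + s + 2 : ℤ)) := by
    rw [Prod.mk.injEq]; exact ⟨by ring, by ring⟩
  have e8 : ((m + (h + r) : ℤ), (n + (k + s + 1) : ℤ)) = ((m + h + r : ℤ), (n + k + s + 1 : ℤ)) := by
    rw [Prod.mk.injEq]; exact ⟨by ring, by ring⟩
  have e9 : ((m + (h + r) : ℤ), (n + (k + s) + 1 : ℤ)) = ((m + h + r : ℤ), (n + k + s + 1 : ℤ)) := by
    rw [Prod.mk.injEq]; exact ⟨by ring, by ring⟩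
  have e10 : ((m + (h + r) : ℤ), (n + (k + s) : ℤ)) = ((m + h + r : ℤ), (n + k + s : ℤ)) := by
    rw [Prod.mk.injEq]; exact ⟨by ring, by ring⟩
  simp only [Ring.lie_def, LieRing.of_associative_ring_bracket, LinearMap.sub_apply, Module.End.mul_apply,
    LinearMap.add_apply, LinearMap.smul_apply, actA0_single, map_add,
    map_smul, smul_add, smul_smul, e1, e2, e3, e4, e5, e6, e7, e8, e9, e10]
  push_cast
  have D1 : mu + (n:ℂ) + (s:ℂ) + 1 ≠ 0 := by
    have := hM (n+s+1); push_cast at this; intro H; exact this (by linear_combination H)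
  have D2 : mu + (n:ℂ) + (k:ℂ) + 1 ≠ 0 := by
    have := hM (n+k+1); push_cast at this; intro H; exact this (by linear_combination H)
  have D3 : mu + (n:ℂ) + (s:ℂ) + (k:ℂ) + 2 ≠ 0 := by
    have := hM (n+s+k+2); push_cast at this; intro H; exact this (by linear_combination H)
  have D4 : mu + (n:ℂ) + (s:ℂ) + (k:ℂ) + 1 ≠ 0 := by
    have := hM (n+s+k+1); push_cast at this; intro H; exact this (by linear_combination H)
  have D5 : lam + (m:ℂ) + (r:ℂ) ≠ 0 := by
    have := hL (m+r); push_cast at this; intro H; exact this (by linear_combination H)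
  have D6 : lam + (m:ℂ) + (h:ℂ) ≠ 0 := by
    have := hL (m+h); push_cast at this; intro H; exact this (by linear_combination H)
  have D7 : lam + (m:ℂ) + (r:ℂ) + (h:ℂ) ≠ 0 := by
    have := hL (m+r+h); push_cast at this; intro H; exact this (by linear_combination H)
  have c1 : lam + ((m:ℂ) + (r:ℂ)) = lam + (m:ℂ) + (r:ℂ) := by ring
  have c2 : lam + ((m:ℂ) + (h:ℂ)) = lam + (m:ℂ) + (h:ℂ) := by ring
  have c3 : mu + ((n:ℂ) + (s:ℂ) + 1) = mu + (n:ℂ) + (s:ℂ) + 1 := by ring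
  have c4 : mu + ((n:ℂ) + (k:ℂ) + 1) = mu + (n:ℂ) + (k:ℂ) + 1 := by ring
  have c5 : mu + ((n:ℂ) + (s:ℂ)) = mu + (n:ℂ) + (s:ℂ) := by ring
  have c6 : mu + ((n:ℂ) + (k:ℂ)) = mu + (n:ℂ) + (k:ℂ) := by ring
  have c7 : lam + (m:ℂ) + ((h:ℂ) + (r:ℂ)) = lam + (m:ℂ) + (r:ℂ) + (h:ℂ) := by ring
  have c8 : lam + (m:ℂ) + (h:ℂ) + (r:ℂ) = lam + (m:ℂ) + (r:ℂ) + (h:ℂ) := by ring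
  have c9 : mu + (n:ℂ) + ((k:ℂ) + (s:ℂ) + 1) + 1 = mu + (n:ℂ) + (s:ℂ) + (k:ℂ) + 2 := by ring
  have c10 : mu + (n:ℂ) + (s:ℂ) + 1 + (k:ℂ) + 1 = mu + (n:ℂ) + (s:ℂ) + (k:ℂ) + 2 := by ring
  have c11 : mu + (n:ℂ) + (k:ℂ) + 1 + (s:ℂ) + 1 = mu + (n:ℂ) + (s:ℂ) + (k:ℂ) + 2 := by ring
  have c12 : mu + (n:ℂ) + ((k:ℂ) + (s:ℂ)) + 1 = mu + (n:ℂ) + (s:ℂ) + (k:ℂ) + 1 := by ring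
  have c13 : mu + (n:ℂ) + (k:ℂ) + (s:ℂ) + 1 = mu + (n:ℂ) + (s:ℂ) + (k:ℂ) + 1 := by ring
  match_scalars
  all_goals simp only [c1, c2, c3, c4, c5, c6, c7, c8, c9, c10, c11, c12, c13, mul_one]
  · exact keyK1 (mu + (n:ℂ)) (lam + (m:ℂ)) c (r:ℂ) (h:ℂ) _ _ _ D1 D2 D3
  · exact keyK2 (lam + (m:ℂ)) (mu + (n:ℂ)) c (r:ℂ) (h:ℂ) (s:ℂ) (k:ℂ) _ _ D1 D2 D5 D6 D7 D4
  · exact keyK1 (lam + (m:ℂ)) (mu + (n:ℂ)) c (s:ℂ) (k:ℂ) _ _ _ D5 D6 D7
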